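/- arXiv:1504.07696 — 2 statements merged into one kernel-verified Lean document; each statement's English description precedes it below -/
import Mathlib

section
/- The two representations of B_n^α(t) agree: (1/n!) ∑_{k=0}^n (ωt)_k (ω²t)_k (α+t)_{n−k} (α−t+k)_{n−k} / (k!(n−k)!) = (1/n!) ∑_{k=0}^n (α+ωt)_k (α+ω²t)_k (t)_{n−k} (α−t+k)_{n−k} / (k!(n−k)!), for all n ≥ 0, α, t ∈ ℂ. -/
/-!
With `a = ωt`, `b = ω²t`, `c = α - t`, `e = α + t`, the relation `1 + ω + ω² = 0` gives
`c - a = α + ω²t`, `c - b = α + ωt` and `a + b - c + e = t`, so after clearing factorials the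
theorem is an instance of the transformation of terminating hypergeometric sums
`∑ₖ C(n,k) (a)ₖ (b)ₖ (e)ₙ₋ₖ (c+k)ₙ₋ₖ`
`  = ∑ₖ C(n,k) (c-a)ₖ (c-b)ₖ (a+b-c+e)ₙ₋ₖ (c+k)ₙ₋ₖ`.
To prove it, expand `(a+b-c+e)ₙ₋ₖ` by Chu–Vandermonde and resum along diagonals `j = k + i`.
Each diagonal is a Pfaff–Saalschütz sum
`∑ₖ C(j,k) (c-a)ₖ (c-b)ₖ (a+b-c)ⱼ₋ₖ (c+k)ⱼ₋ₖ = (a)ⱼ (b)ⱼ`,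
which follows by induction on `j`: a Zeilberger-type certificate `G` gives
`F(j+1,k) = (a+j)(b+j) F(j,k) + G(k+1) - G(k)` for the summand `F`, and the `G`-part telescopes.
-/

open scoped BigOperators

/-- The Pochhammer symbol (rising factorial) (a)_n. -/
noncomputable def poch (a : ℂ) (n : ℕ) : ℂ := (ascPochhammer ℂ n).eval a

/-- ω = e^{2πi/3}. -/
noncomputable def ω : ℂ := Complex.exp (2 * Real.pi * Complex.I / 3)

/-- The polynomials B_n^α(t). -/
noncomputable def Ba (α t : ℂ) (n : ℕ) : ℂ :=
  (1 / (Nat.factorial n : ℂ)) * ∑ k ∈ Finset.range (n + 1),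
    poch (ω * t) k * poch (ω ^ 2 * t) k * poch (α + t) (n - k) * poch (α - t + k) (n - k)
      / ((Nat.factorial k : ℂ) * (Nat.factorial (n - k) : ℂ))

open Finset Polynomial

section AscPochhammer

variable {R : Type*} [CommRing R]

local notation:max "(" x ")_" k:max => Polynomial.eval x (ascPochhammer _ k)

theorem ascPochhammer_eval_add_index (x : R) (m n : ℕ) : (x)_(m + n) = (x)_m * (x + m)_n := by
  rw [← ascPochhammer_mul, eval_mul, eval_comp]
  simp

theorem ascPochhammer_eval_add (x y : R) (n : ℕ) :
    (x + y)_n = ∑ k ∈ range (n + 1), (n.choose k : R) * ((x)_k * (y)_(n - k)) := by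
  induction n with
  | zero => simp
  | succ n ih =>
    rw [sum_choose_succ_mul (fun i j => (x)_i * (y)_j), ascPochhammer_succ_eval, ih, sum_mul,
      ← sum_add_distrib]
    refine sum_congr rfl fun k hk => ?_
    have hkn : k ≤ n := Nat.lt_succ_iff.mp (mem_range.mp hk)
    rw [Nat.sub_add_comm hkn, ascPochhammer_succ_eval, ascPochhammer_succ_eval, Nat.cast_sub hkn]
    ring

noncomputable def saalschutzTerm (a b c : R) (n k : ℕ) : R :=
  n.choose k * ((c - a)_k * (c - b)_k * (a + b - c)_(n - k) * (c + k)_(n - k))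

noncomputable def saalschutzCert (a b c : R) (n : ℕ) : ℕ → R
  | 0 => 0
  | k + 1 =>
    -(n.choose k * ((c - a)_(k + 1) * (c - b)_(k + 1) * (a + b - c)_(n - k) * (c + k)_(n - k)))

theorem saalschutzTerm_succ (a b c : R) {n k : ℕ} (hk : k ≤ n + 1) :
    saalschutzTerm a b c (n + 1) k = (a + n) * (b + n) * saalschutzTerm a b c n k
      + (saalschutzCert a b c n (k + 1) - saalschutzCert a b c n k) := by
  rcases k with _ | j
  · simp only [saalschutzTerm, saalschutzCert, Nat.choose_zero_right, Nat.cast_one,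
      Nat.cast_zero, tsub_zero, add_zero, zero_add, sub_zero, one_mul, mul_one, ascPochhammer_zero,
      ascPochhammer_one, ascPochhammer_succ_eval, eval_one, eval_X]
    ring
  rcases Nat.lt_or_ge j n with hj | hj
  · obtain ⟨m, rfl⟩ : ∃ m, n = j + 1 + m := ⟨n - (j + 1), by omega⟩
    have h_pascal : ((j + 1 + m + 1).choose (j + 1) : R) =
        (j + 1 + m).choose j + (j + 1 + m).choose (j + 1) := by
      rw [← Nat.cast_add, ← Nat.choose_succ_succ']
    have h_absorb :
        ((j + 1 + m).choose (j + 1) : R) * (j + 1) = (j + 1 + m).choose j * (m + 1) := by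
      rw [← Nat.cast_add_one, ← Nat.cast_add_one, ← Nat.cast_mul, ← Nat.cast_mul,
        Nat.choose_succ_right_eq, show j + 1 + m - j = m + 1 by omega]
    simp only [saalschutzTerm, saalschutzCert, show j + 1 + m + 1 - (j + 1) = m + 1 by omega,
      show j + 1 + m - (j + 1) = m by omega, show j + 1 + m - j = m + 1 by omega]
    rw [ascPochhammer_succ_eval m (a + b - c), ascPochhammer_succ_eval m,
      ascPochhammer_succ_eval (j + 1) (c - a), ascPochhammer_succ_eval (j + 1) (c - b),
      Nat.add_comm m 1, ascPochhammer_eval_add_index (c + j) 1 m, ascPochhammer_one, eval_X]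
    push_cast
    simp only [← add_assoc]
    set P := (c - a)_(j + 1) * (c - b)_(j + 1) * (a + b - c)_m * (c + j + 1)_m
    linear_combination (P * (a + b - c + m) * (c + j + 1 + m)) * h_pascal
      - (P * (a + b - c + m)) * h_absorb
  · obtain rfl : j = n := by omega
    simp [saalschutzTerm, saalschutzCert]

theorem sum_saalschutzTerm (a b c : R) (n : ℕ) :
    ∑ k ∈ range (n + 1), saalschutzTerm a b c n k = (a)_n * (b)_n := by
  induction n with
  | zero => simp [saalschutzTerm]
  | succ n ih =>
    have h_term : saalschutzTerm a b c n (n + 1) = 0 := by simp [saalschutzTerm]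
    have h_cert : saalschutzCert a b c n (n + 2) = 0 := by simp [saalschutzCert]
    calc ∑ k ∈ range (n + 2), saalschutzTerm a b c (n + 1) k
        = ∑ k ∈ range (n + 2), ((a + n) * (b + n) * saalschutzTerm a b c n k
            + (saalschutzCert a b c n (k + 1) - saalschutzCert a b c n k)) :=
          sum_congr rfl fun k hk =>
            saalschutzTerm_succ a b c (Nat.lt_succ_iff.mp (mem_range.mp hk))
      _ = (a + n) * (b + n) * ∑ k ∈ range (n + 1), saalschutzTerm a b c n k := by
          rw [sum_add_distrib, sum_range_sub, ← mul_sum, sum_range_succ _ (n + 1), h_term, h_cert]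
          simp [saalschutzCert]
      _ = (a)_(n + 1) * (b)_(n + 1) := by
          rw [ih, ascPochhammer_succ_eval, ascPochhammer_succ_eval]
          ring

theorem sum_saalschutz_diagonal (a b c e : R) {n j : ℕ} (hjn : j ≤ n) :
    ∑ k ∈ range (j + 1), (n.choose k : R) * (n - k).choose (j - k) *
      ((c - a)_k * (c - b)_k * (a + b - c)_(j - k) * (e)_(n - k - (j - k)) * (c + k)_(n - k)) =
    n.choose j * ((a)_j * (b)_j * (e)_(n - j) * (c + j)_(n - j)) := by
  have h_term : ∀ k ∈ range (j + 1), (n.choose k : R) * (n - k).choose (j - k) *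
      ((c - a)_k * (c - b)_k * (a + b - c)_(j - k) * (e)_(n - k - (j - k)) * (c + k)_(n - k)) =
      n.choose j * ((e)_(n - j) * (c + j)_(n - j)) * saalschutzTerm a b c j k := by
    intro k hk
    have hkj : k ≤ j := Nat.lt_succ_iff.mp (mem_range.mp hk)
    have h_choose : (n.choose k : R) * (n - k).choose (j - k) = n.choose j * j.choose k := by
      rw [← Nat.cast_mul, ← Nat.cast_mul, Nat.choose_mul hkj]
    have h_poch : (c + k)_(n - k) = (c + k)_(j - k) * (c + j)_(n - j) := by
      rw [show n - k = j - k + (n - j) by omega, ascPochhammer_eval_add_index, Nat.cast_sub hkj,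
        add_add_sub_cancel]
    rw [h_choose, h_poch, show n - k - (j - k) = n - j by omega, saalschutzTerm]
    ring
  rw [sum_congr rfl h_term, ← mul_sum, sum_saalschutzTerm]
  ring

theorem sum_choose_mul_ascPochhammer_transform (a b c e : R) (n : ℕ) :
    ∑ k ∈ range (n + 1), (n.choose k : R) * ((a)_k * (b)_k * (e)_(n - k) * (c + k)_(n - k)) =
      ∑ k ∈ range (n + 1), (n.choose k : R) *
        ((c - a)_k * (c - b)_k * (a + b - c + e)_(n - k) * (c + k)_(n - k)) := by
  symm
  calc _ = ∑ k ∈ range (n + 1), ∑ i ∈ range (n + 1 - k),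
          (n.choose k : R) * (n - k).choose i *
            ((c - a)_k * (c - b)_k * (a + b - c)_i * (e)_(n - k - i) * (c + k)_(n - k)) := by
        refine sum_congr rfl fun k hk => ?_
        rw [ascPochhammer_eval_add, ← Nat.sub_add_comm (Nat.lt_succ_iff.mp (mem_range.mp hk))]
        simp only [mul_sum, sum_mul]
        refine sum_congr rfl fun i _ => ?_
        ring
    _ = ∑ j ∈ range (n + 1), ∑ k ∈ range (j + 1),
          (n.choose k : R) * (n - k).choose (j - k) *
            ((c - a)_k * (c - b)_k * (a + b - c)_(j - k) * (e)_(n - k - (j - k)) *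
              (c + k)_(n - k)) :=
      (sum_range_diag_flip (n + 1) fun k i => (n.choose k : R) * (n - k).choose i *
        ((c - a)_k * (c - b)_k * (a + b - c)_i * (e)_(n - k - i) * (c + k)_(n - k))).symm
    _ = _ := sum_congr rfl fun j hj =>
      sum_saalschutz_diagonal a b c e (Nat.lt_succ_iff.mp (mem_range.mp hj))

end AscPochhammer

theorem sum_div_factorial_mul_factorial {K : Type*} [Field K] [CharZero K] (f : ℕ → K)
    (n : ℕ) :
    ∑ k ∈ range (n + 1), f k / (k.factorial * (n - k).factorial) =
      (∑ k ∈ range (n + 1), n.choose k * f k) / n.factorial := by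
  rw [sum_div]
  refine sum_congr rfl fun k hk => ?_
  have : (n.factorial : K) ≠ 0 := Nat.cast_ne_zero.mpr n.factorial_ne_zero
  rw [Nat.cast_choose K (Nat.lt_succ_iff.mp (mem_range.mp hk))]
  field_simp

theorem omega_sq_add_omega_add_one : ω ^ 2 + ω + 1 = 0 := by
  have hω : IsPrimitiveRoot ω 3 := by
    simpa [ω] using Complex.isPrimitiveRoot_exp 3 (by norm_num)
  have h := hω.geom_sum_eq_zero (by norm_num)
  simp only [sum_range_succ, range_zero, sum_empty, pow_zero, pow_one, zero_add] at h
  linear_combination h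

theorem Ba_two_representations (n : ℕ) (α t : ℂ) :
    (1 / (Nat.factorial n : ℂ)) * ∑ k ∈ Finset.range (n + 1),
      poch (ω * t) k * poch (ω ^ 2 * t) k * poch (α + t) (n - k) * poch (α - t + k) (n - k)
        / ((Nat.factorial k : ℂ) * (Nat.factorial (n - k) : ℂ))
    = (1 / (Nat.factorial n : ℂ)) * ∑ k ∈ Finset.range (n + 1),
      poch (α + ω * t) k * poch (α + ω ^ 2 * t) k * poch t (n - k) * poch (α - t + k) (n - k)
        / ((Nat.factorial k : ℂ) * (Nat.factorial (n - k) : ℂ)) := by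
  have hω := omega_sq_add_omega_add_one
  have key := sum_choose_mul_ascPochhammer_transform (ω * t) (ω ^ 2 * t) (α - t) (α + t) n
  rw [show α - t - ω * t = α + ω ^ 2 * t by linear_combination (-t) * hω,
    show α - t - ω ^ 2 * t = α + ω * t by linear_combination (-t) * hω,
    show ω * t + ω ^ 2 * t - (α - t) + (α + t) = t by linear_combination t * hω] at key
  simp only [poch]
  rw [sum_div_factorial_mul_factorial, sum_div_factorial_mul_factorial, key]
  congr 2
  exact sum_congr rfl fun k _ => by ring
end

section
/- With B_n = B_n^0 the polynomials from the recursion n³B_n − (n+1)²(2n+1)B_{n+1} + (n+2)²(n+1)B_{n+2} = t³B_n (B_0 = 1, B_1 = 0), one has B_n^1(t) = ∑_{k=0}^n B_k(t) for all n ≥ 0. -/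
open scoped BigOperators

/-!
Only the factors `(α + t)_{n-k} (α - t + k)_{n-k}` depend on `α`, so the coefficients
`(ωt)_k (ω²t)_k / k!` may be replaced by an arbitrary sequence `c`. Term by term,
`(1 + t + m)(1 - t + k + m) - t(k - t) = (m + 1)(m + k + 1)`, which gives
`B_{n+1}^1 - B_{n+1}^0 = B_n^1`; the identity follows by induction on `n`.
-/

open Finset Nat

@[simp] lemma poch_zero (a : ℂ) : poch a 0 = 1 := by
  simp [poch]

lemma poch_succ (a : ℂ) (n : ℕ) : poch a (n + 1) = poch a n * (a + n) :=
  ascPochhammer_succ_eval n a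

lemma poch_succ_left (a : ℂ) (n : ℕ) : poch a (n + 1) = a * poch (a + 1) n := by
  simp [poch, ascPochhammer_succ_left, Polynomial.eval_comp]

lemma poch_pair_succ_sub (t x : ℂ) (m : ℕ) :
    poch (1 + t) (m + 1) * poch (1 - t + x) (m + 1) - poch t (m + 1) * poch (x - t) (m + 1) =
      (m + 1) * (m + x + 1) * (poch (1 + t) m * poch (1 - t + x) m) := by
  rw [poch_succ, poch_succ, poch_succ_left, poch_succ_left (x - t), add_comm t 1,
    show x - t + 1 = 1 - t + x by ring]
  ring

noncomputable def pochPairSum (c : ℕ → ℂ) (α t : ℂ) (n : ℕ) : ℂ :=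
  ∑ k ∈ range (n + 1), c k * (poch (α + t) (n - k) * poch (α - t + k) (n - k)) / (n ! * (n - k)!)

lemma Ba_eq_pochPairSum (α t : ℂ) (n : ℕ) :
    Ba α t n = pochPairSum (fun k ↦ poch (ω * t) k * poch (ω ^ 2 * t) k / k !) α t n := by
  rw [Ba, pochPairSum, mul_sum]
  exact sum_congr rfl fun k _ ↦ by ring

lemma pochPairSum_term_sub (c t : ℂ) (k m : ℕ) :
    c * (poch (1 + t) (m + 1) * poch (1 - t + k) (m + 1)) / ((k + m + 1)! * (m + 1)!) -
        c * (poch (0 + t) (m + 1) * poch (0 - t + k) (m + 1)) / ((k + m + 1)! * (m + 1)!) =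
      c * (poch (1 + t) m * poch (1 - t + k) m) / ((k + m)! * m !) := by
  have hsub := poch_pair_succ_sub t k m
  rw [zero_add, zero_sub, neg_add_eq_sub, ← sub_div, ← mul_sub, hsub]
  have hkm : ((k + m : ℕ) : ℂ) + 1 ≠ 0 := Nat.cast_add_one_ne_zero _
  have hm : (m : ℂ) + 1 ≠ 0 := Nat.cast_add_one_ne_zero _
  rw [factorial_succ, factorial_succ m, Nat.cast_mul, Nat.cast_mul]
  push_cast at hkm hm ⊢
  field_simp
  ring

lemma pochPairSum_one_succ (c : ℕ → ℂ) (t : ℂ) (n : ℕ) :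
    pochPairSum c 1 t (n + 1) = pochPairSum c 0 t (n + 1) + pochPairSum c 1 t n := by
  rw [← sub_eq_iff_eq_add', pochPairSum, pochPairSum, ← sum_sub_distrib, sum_range_succ,
    Nat.sub_self]
  simp only [poch_zero, sub_self, add_zero]
  refine sum_congr rfl fun k hk ↦ ?_
  obtain ⟨m, rfl⟩ := Nat.exists_eq_add_of_le (Nat.lt_succ_iff.mp (mem_range.mp hk))
  rw [show k + m + 1 - k = m + 1 by omega, Nat.add_sub_cancel_left]
  exact pochPairSum_term_sub (c k) t k m

lemma pochPairSum_one_eq_sum_zero (c : ℕ → ℂ) (t : ℂ) (n : ℕ) :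
    pochPairSum c 1 t n = ∑ k ∈ range (n + 1), pochPairSum c 0 t k := by
  induction n with
  | zero => simp [pochPairSum]
  | succ n ih => rw [sum_range_succ, ← ih, pochPairSum_one_succ, add_comm]

theorem Ba_one_eq_partial_sums (t : ℂ) (n : ℕ) :
    Ba 1 t n = ∑ k ∈ Finset.range (n + 1), Ba 0 t k := by
  simp only [Ba_eq_pochPairSum]
  exact pochPairSum_one_eq_sum_zero _ t n
end
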